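/- (Elliptic curve with two poles: determination of A_3, A_4, B_3.) With A_1, A_2, B_1, B_2 already fixed by the spectral data, the condition that the companion normal form ∇_0 = d + (0, β; γ, δ) has apparent singular points at q_1, q_2, q_3 is the 3×3 linear system M·(A_3, A_4, B_3)^T = −(C_1, C_2, C_3)^T, where M has rows (1, u_j, −ζ_j) and C_j = Σ_{j'≠j} ((ζ_{j'}−ζ_j)/2)·(v_j+v_{j'})/(u_j−u_{j'}) + (A_1 + A_2 v_j − ζ_j(B_1 + B_2 v_j) − ζ_j^2)/(u_j − t). This system has a unique solution (given by Cramer's rule) if and only if det( (1, u_1, ζ_1; 1, u_2, ζ_2; 1, u_3, ζ_3) ) ≠ 0. -/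
import Mathlib


/-- elliptic curve with two poles: determination of
`A₃, A₄, B₃`.  On the elliptic curve `C : y₁² = x₁(x₁−1)(x₁−λ)` with
`D = t₁ + t₂` over `x₁ = t` and apparent singularities `q_j = (u_j, v_j)`
(`j = 1,2,3`, with `u_j ∉ {0,1,λ,t}` and the `u_j` pairwise distinct), and
with `A₁, A₂, B₁, B₂` already fixed by the spectral data, the condition that
the companion normal form `∇₀ = d + (0, β; γ, δ)` has apparent singular
points at `q₁, q₂, q₃` is the 3×3 linear system
`M·(A₃, A₄, B₃)ᵀ = −(C₁, C₂, C₃)ᵀ` with rows `(1, u_j, −ζ_j)` of `M`, where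
`C_j = Σ_{j'≠j} ((ζ_{j'}−ζ_j)/2)·(v_j+v_{j'})/(u_j−u_{j'})
       + (A₁ + A₂v_j − ζ_j(B₁+B₂v_j) − ζ_j²)/(u_j − t)`;
equivalently `C_j + A₃ + A₄u_j − ζ_jB₃ = 0` for each `j`.  This system has a
unique solution `(A₃, A₄, B₃)` (given by Cramer's rule) if and only if
`det (1, u₁, ζ₁; 1, u₂, ζ₂; 1, u₃, ζ₃) ≠ 0`. -/
theorem statement16 (lam t : ℂ) (A1 A2 B1 B2 : ℂ) (u v ζ : Fin 3 → ℂ)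
    (hcurve : ∀ j, (v j) ^ 2 = u j * (u j - 1) * (u j - lam))
    (hu : ∀ j, u j ≠ 0 ∧ u j ≠ 1 ∧ u j ≠ lam ∧ u j ≠ t)
    (huinj : Function.Injective u) :
    (∃! x : ℂ × ℂ × ℂ,  -- `x = (A₃, A₄, B₃)`
        ∀ j : Fin 3,
          ((∑ j' ∈ Finset.univ.erase j,
              ((ζ j' - ζ j) / 2) * ((v j + v j') / (u j - u j'))) +
            (A1 + A2 * v j - ζ j * (B1 + B2 * v j) - (ζ j) ^ 2) / (u j - t)) +
            x.1 + x.2.1 * u j - ζ j * x.2.2 = 0) ↔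
      (Matrix.of fun j : Fin 3 => ![(1 : ℂ), u j, ζ j]).det ≠ 0 := by
  set C : Fin 3 → ℂ := fun j =>
    (∑ j' ∈ Finset.univ.erase j,
        ((ζ j' - ζ j) / 2) * ((v j + v j') / (u j - u j'))) +
      (A1 + A2 * v j - ζ j * (B1 + B2 * v j) - (ζ j) ^ 2) / (u j - t) with hCdef
  set N : Matrix (Fin 3) (Fin 3) ℂ := Matrix.of fun j : Fin 3 => ![(1 : ℂ), u j, ζ j]
    with hNdef
  have hmv : ∀ (y : Fin 3 → ℂ) (j : Fin 3),
      N.mulVec y j = y 0 + u j * y 1 + ζ j * y 2 := by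
    intro y j
    simp [hNdef, Matrix.mulVec, dotProduct, Fin.sum_univ_three]
  have key : ∀ x : ℂ × ℂ × ℂ,
      (∀ j : Fin 3, C j + x.1 + x.2.1 * u j - ζ j * x.2.2 = 0) ↔
        N.mulVec ![x.1, x.2.1, -x.2.2] = fun j => -C j := by
    intro x
    constructor
    · intro h
      funext j
      have := h j
      rw [hmv]
      simp only [Matrix.cons_val_zero, Matrix.cons_val_one, Matrix.head_cons,
        Matrix.cons_val_two, Matrix.tail_cons]
      linear_combination this
    · intro h j
      have := congrFun h j
      rw [hmv] at this
      simp only [Matrix.cons_val_zero, Matrix.cons_val_one, Matrix.head_cons,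
        Matrix.cons_val_two, Matrix.tail_cons] at this
      linear_combination this
  constructor
  · rintro ⟨x0, hx0, huniq⟩ hdet0
    obtain ⟨k, hk0, hk⟩ := (Matrix.exists_mulVec_eq_zero_iff).2 hdet0
    set x1 : ℂ × ℂ × ℂ := (x0.1 + k 0, x0.2.1 + k 1, x0.2.2 - k 2) with hx1def
    have hx1 : ∀ j : Fin 3, C j + x1.1 + x1.2.1 * u j - ζ j * x1.2.2 = 0 := by
      rw [key]
      funext j
      have h0 := congrFun ((key x0).1 hx0) j
      have h1 := congrFun hk j
      rw [hmv] at h0 h1 ⊢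
      simp only [Matrix.cons_val_zero, Matrix.cons_val_one, Matrix.head_cons,
        Matrix.cons_val_two, Matrix.tail_cons, Pi.zero_apply, hx1def] at h0 h1 ⊢
      linear_combination h0 + h1
    have heq : x1 = x0 := huniq x1 hx1
    apply hk0
    funext j
    fin_cases j
    · have := congrArg Prod.fst heq
      simpa [hx1def] using this
    · have := congrArg (fun p : ℂ × ℂ × ℂ => p.2.1) heq
      simpa [hx1def] using this
    · have := congrArg (fun p : ℂ × ℂ × ℂ => p.2.2) heq
      have : x0.2.2 - k 2 = x0.2.2 := by simpa [hx1def] using this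
      have := sub_eq_self.mp this
      simpa using this
  · intro hdet
    have hunit : IsUnit N.det := isUnit_iff_ne_zero.mpr hdet
    have hNinv : N * N⁻¹ = 1 := Matrix.mul_nonsing_inv N hunit
    set y : Fin 3 → ℂ := N⁻¹.mulVec (fun j => -C j) with hydef
    have hy : N.mulVec y = fun j => -C j := by
      rw [hydef, Matrix.mulVec_mulVec, hNinv, Matrix.one_mulVec]
    refine ⟨(y 0, y 1, -y 2), ?_, ?_⟩
    · refine (key (y 0, y 1, -y 2)).2 ?_
      show N.mulVec ![y 0, y 1, -(-y 2)] = fun j => -C j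
      have hvec : (![y 0, y 1, -(-y 2)] : Fin 3 → ℂ) = y := by
        funext j; fin_cases j <;> simp
      rw [hvec, hy]
    · rintro x hx
      have hx' := (key x).1 hx
      have hdiff : N.mulVec (![x.1, x.2.1, -x.2.2] - y) = 0 := by
        rw [Matrix.mulVec_sub, hx', hy]
        simp
      have hzero : (![x.1, x.2.1, -x.2.2] - y : Fin 3 → ℂ) = 0 := by
        by_contra hne
        exact hdet (Matrix.exists_mulVec_eq_zero_iff.1 ⟨_, hne, hdiff⟩)
      have h0 := congrFun hzero 0
      have h1 := congrFun hzero 1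
      have h2 := congrFun hzero 2
      simp only [Pi.sub_apply, Matrix.cons_val_zero, Matrix.cons_val_one, Matrix.head_cons,
        Matrix.cons_val_two, Matrix.tail_cons, Pi.zero_apply, sub_eq_zero] at h0 h1 h2
      have : x.2.2 = -y 2 := by linear_combination -h2
      exact Prod.ext h0 (Prod.ext h1 this)
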